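/- Let L be a finite-dimensional real vector space with a nondegenerate symmetric bilinear form ⟨·,·⟩, let Λ ⊆ L be a countable subset, fix ξ ∈ L, r, a ∈ ℝ and m ∈ ℝ with m ≠ 0, and equip ℝ × L × ℝ with the Mukai pairing ((r₁,ξ₁,a₁),(r₂,ξ₂,a₂)) := ⟨ξ₁,ξ₂⟩ − r₁a₂ − r₂a₁; set α_{m,ω} := (−r, m r ω, a + m⟨ω,ξ⟩). Then the set N := {ω ∈ L : there exist s, b ∈ ℤ and D ∈ Λ with rD − sξ ≠ 0 and (α_{m,ω}, (s,D,b)) = 0} is contained in a countable union of proper affine hyperplanes of L; in particular its complement L ∖ N is dense in L. (This is the abstract content of Lemma 5.1 of the paper: for ω sufficiently generic, q_M(λ_v(α_{m,ω}), β) ≠ 0 for every integral class β.) -/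

import Mathlib

/-- The Mukai pairing on `ℝ × L × ℝ` associated to a bilinear form `⟨·,·⟩` on `L`:
`((r₁,ξ₁,a₁),(r₂,ξ₂,a₂)) ↦ ⟨ξ₁,ξ₂⟩ - r₁a₂ - r₂a₁`. -/
def mukaiPairing {L : Type*} [AddCommGroup L] [Module ℝ L]
    (Bl : L →ₗ[ℝ] L →ₗ[ℝ] ℝ) (x y : ℝ × L × ℝ) : ℝ :=
  Bl x.2.1 y.2.1 - x.1 * y.2.2 - y.1 * x.2.2

/-- The class `α_{m,ω} = (-r, m r ω, a + m⟨ω,ξ⟩)`. -/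
def alphaOmega {L : Type*} [AddCommGroup L] [Module ℝ L]
    (Bl : L →ₗ[ℝ] L →ₗ[ℝ] ℝ) (r a m : ℝ) (ξ ω : L) : ℝ × L × ℝ :=
  (-r, (m * r) • ω, a + m * Bl ω ξ)

/-!
Pairing `α_{m,ω}` with `(s, D, b)` gives `m ⟨ω, rD - sξ⟩ + rb - sa`, an affine function of `ω`
whose linear part is nonzero as soon as `rD - sξ ≠ 0`, by nondegeneracy. So `N` lies in the union
of the hyperplanes `⟨ω, rD - sξ⟩ = (sa - rb)/m`, indexed by the countable set `ℤ × ℤ × Λ`. A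
proper hyperplane of a finite-dimensional space is closed with empty interior, so by Baire's
theorem the complement of a countable union of them is dense.
-/

open Set

lemma mukaiPairing_alphaOmega {L : Type*} [AddCommGroup L] [Module ℝ L]
    (Bl : L →ₗ[ℝ] L →ₗ[ℝ] ℝ) (r a m s b : ℝ) (ξ ω D : L) :
    mukaiPairing Bl (alphaOmega Bl r a m ξ ω) (s, D, b) =
      m * Bl ω (r • D - s • ξ) + r * b - s * a := by
  simp only [mukaiPairing, alphaOmega, map_sub, map_smul, LinearMap.smul_apply, smul_eq_mul]
  ring

lemma LinearMap.flip_ne_zero_of_symm {L : Type*} [AddCommGroup L] [Module ℝ L]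
    {Bl : L →ₗ[ℝ] L →ₗ[ℝ] ℝ} (hsymm : ∀ x y, Bl x y = Bl y x)
    (hnondeg : ∀ x, (∀ y, Bl x y = 0) → x = 0) {v : L} (hv : v ≠ 0) : Bl.flip v ≠ 0 :=
  fun h ↦ hv <| hnondeg v fun y ↦ by rw [hsymm, ← flip_apply, h, zero_apply]

section Hyperplanes

variable {L : Type*} [NormedAddCommGroup L] [NormedSpace ℝ L]

def IsCoveredByCountableHyperplanes (N : Set L) : Prop :=
  ∃ (ι : Type) (_ : Countable ι) (f : ι → (L →ₗ[ℝ] ℝ)) (c : ι → ℝ),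
    (∀ i, f i ≠ 0) ∧ N ⊆ ⋃ i, {ω | f i ω = c i}

lemma IsCoveredByCountableHyperplanes.of_countable {N : Set L} {ι : Type*} [Countable ι]
    (f : ι → (L →ₗ[ℝ] ℝ)) (c : ι → ℝ) (hf : ∀ i, f i ≠ 0)
    (hN : N ⊆ ⋃ i, {ω | f i ω = c i}) : IsCoveredByCountableHyperplanes N := by
  let e := equivShrink.{0} ι
  refine ⟨Shrink ι, Countable.of_equiv ι e, fun j ↦ f (e.symm j), fun j ↦ c (e.symm j),
    fun j ↦ hf _, hN.trans fun ω hω ↦ ?_⟩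
  obtain ⟨i, hi⟩ := mem_iUnion.1 hω
  exact mem_iUnion.2 ⟨e i, by simpa using hi⟩

variable [FiniteDimensional ℝ L]

lemma isMeagre_setOf_eq {f : L →ₗ[ℝ] ℝ} (hf : f ≠ 0) (c : ℝ) : IsMeagre {ω | f ω = c} := by
  have hc : IsMeagre ({c} : Set ℝ) :=
    (isClosed_singleton.isNowhereDense_iff.2 (interior_singleton c)).isMeagre
  exact hc.preimage_of_isOpenMap f.continuous_of_finiteDimensional
    (f.isOpenMap_of_finiteDimensional (LinearMap.surjective_of_ne_zero hf))

lemma IsCoveredByCountableHyperplanes.isMeagre {N : Set L}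
    (hN : IsCoveredByCountableHyperplanes N) : IsMeagre N := by
  obtain ⟨ι, _, f, c, hf, hNsub⟩ := hN
  exact (isMeagre_iUnion fun i ↦ isMeagre_setOf_eq (hf i) (c i)).mono hNsub

end Hyperplanes

/-- Abstract content of Lemma 5.1 of the paper: the set of `ω` for which
`(α_{m,ω}, (s,D,b)) = 0` for some integers `s, b` and some `D` in a countable set `Λ` with
`rD - sξ ≠ 0` is contained in a countable union of proper affine hyperplanes; in particular
its complement is dense. -/
theorem stmt_6 {L : Type*} [NormedAddCommGroup L] [NormedSpace ℝ L] [FiniteDimensional ℝ L]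
    (Bl : L →ₗ[ℝ] L →ₗ[ℝ] ℝ) (hsymm : ∀ x y, Bl x y = Bl y x)
    (hnondeg : ∀ x, (∀ y, Bl x y = 0) → x = 0)
    (Λ : Set L) (hΛ : Λ.Countable)
    (ξ : L) (r a m : ℝ) (hm : m ≠ 0) :
    let N : Set L := {ω | ∃ s b : ℤ, ∃ D ∈ Λ,
      r • D - (s : ℝ) • ξ ≠ 0 ∧
      mukaiPairing Bl (alphaOmega Bl r a m ξ ω) ((s : ℝ), D, (b : ℝ)) = 0}
    (∃ (ι : Type) (_ : Countable ι) (f : ι → (L →ₗ[ℝ] ℝ)) (c : ι → ℝ),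
      (∀ i, f i ≠ 0) ∧ N ⊆ ⋃ i, {ω | f i ω = c i}) ∧
    Dense Nᶜ := by
  intro N
  have := hΛ.to_subtype
  have hcover : IsCoveredByCountableHyperplanes N := by
    refine .of_countable (ι := {p : ℤ × ℤ × Λ // r • (p.2.2 : L) - (p.1 : ℝ) • ξ ≠ 0})
      (fun p ↦ Bl.flip (r • (p.1.2.2 : L) - (p.1.1 : ℝ) • ξ))
      (fun p ↦ (p.1.1 * a - r * p.1.2.1) / m)
      (fun p ↦ LinearMap.flip_ne_zero_of_symm hsymm hnondeg p.2) ?_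
    rintro ω ⟨s, b, D, hD, hv, hpair⟩
    refine mem_iUnion.2 ⟨⟨(s, b, ⟨D, hD⟩), hv⟩, ?_⟩
    rw [mukaiPairing_alphaOmega] at hpair
    show Bl ω (r • D - (s : ℝ) • ξ) = (s * a - r * b) / m
    field_simp
    linear_combination hpair
  exact ⟨hcover, dense_of_mem_residual hcover.isMeagre⟩
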